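/- arXiv:1912.06439 — 5 statements merged into one kernel-verified Lean document; each statement's English description precedes it below -/
import Mathlib

section
/- If ω₁₁, ω₁₃, ω₃₃ are complex numbers with |ω₁₁| ≤ 1, |ω₁₃|² ≤ (1 − |ω₁₁|²)/3, |ω₃₃| ≤ 1/3, and |2ω₁₃ − ω₁₁²| ≤ 1, and if a₂ = 2ω₁₁, a₃ = 2ω₁₃ + 3ω₁₁², a₄ = 2ω₃₃ + 8ω₁₁ω₁₃ + (10/3)ω₁₁³, then |a₂a₄ − a₃²| ≤ 11/3. -/
/-! In the Lebedev coordinates the Hankel determinant is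
`a₂a₄ - a₃² = 4ω₁₁ω₃₃ - (2ω₁₃ - ω₁₁²)² - (4/3)ω₁₁⁴`, and the three terms are bounded
by `4/3`, `1` and `4/3` respectively. -/

theorem hankel_det_lebedev_eq {K : Type*} [Field K] [CharZero K] (ω11 ω13 ω33 : K) :
    2 * ω11 * (2 * ω33 + 8 * ω11 * ω13 + (10 / 3) * ω11 ^ 3) - (2 * ω13 + 3 * ω11 ^ 2) ^ 2
      = 4 * (ω11 * ω33) - (2 * ω13 - ω11 ^ 2) ^ 2 - (4 / 3) * ω11 ^ 4 := by
  ring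

theorem norm_four_mul_sub_sq_sub_le {𝕜 : Type*} [RCLike 𝕜] {x z w : 𝕜}
    (hx : ‖x‖ ≤ 1) (hz : ‖z‖ ≤ 1 / 3) (hw : ‖w‖ ≤ 1) :
    ‖4 * (x * z) - w ^ 2 - (4 / 3) * x ^ 4‖ ≤ 11 / 3 := by
  have hxz : ‖4 * (x * z)‖ ≤ 4 / 3 := by
    rw [norm_mul, norm_mul, RCLike.norm_ofNat]
    nlinarith [norm_nonneg x, norm_nonneg z]
  have hw2 : ‖w ^ 2‖ ≤ 1 := by
    rw [norm_pow]
    exact pow_le_one₀ (norm_nonneg w) hw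
  have hx4 : ‖(4 / 3 : 𝕜) * x ^ 4‖ ≤ 4 / 3 := by
    rw [norm_mul, norm_pow, norm_div, RCLike.norm_ofNat, RCLike.norm_ofNat]
    nlinarith [pow_le_one₀ (norm_nonneg x) hx (n := 4)]
  calc ‖4 * (x * z) - w ^ 2 - (4 / 3) * x ^ 4‖
      ≤ ‖4 * (x * z)‖ + ‖w ^ 2‖ + ‖(4 / 3 : 𝕜) * x ^ 4‖ :=
        (norm_sub_le _ _).trans (add_le_add_left (norm_sub_le _ _) _)
    _ ≤ 4 / 3 + 1 + 4 / 3 := by gcongr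
    _ = 11 / 3 := by norm_num

theorem H22_bound_general (ω11 ω13 ω33 : ℂ)
    (h1 : ‖ω11‖ ≤ 1)
    (h3 : ‖ω33‖ ≤ 1/3)
    (h4 : ‖2*ω13 - ω11^2‖ ≤ 1)
    (a2 a3 a4 : ℂ)
    (ha2 : a2 = 2*ω11)
    (ha3 : a3 = 2*ω13 + 3*ω11^2)
    (ha4 : a4 = 2*ω33 + 8*ω11*ω13 + (10/3)*ω11^3) :
    ‖a2*a4 - a3^2‖ ≤ 11/3 := by
  subst ha2 ha3 ha4
  rw [hankel_det_lebedev_eq]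
  exact norm_four_mul_sub_sq_sub_le h1 h3 h4

theorem H22_bound (ω11 ω13 ω33 : ℂ)
    (h1 : ‖ω11‖ ≤ 1)
    (h2 : ‖ω13‖^2 ≤ (1 - ‖ω11‖^2)/3)
    (h3 : ‖ω33‖ ≤ 1/3)
    (h4 : ‖2*ω13 - ω11^2‖ ≤ 1)
    (a2 a3 a4 : ℂ)
    (ha2 : a2 = 2*ω11)
    (ha3 : a3 = 2*ω13 + 3*ω11^2)
    (ha4 : a4 = 2*ω33 + 8*ω11*ω13 + (10/3)*ω11^3) :
    ‖a2*a4 - a3^2‖ ≤ 11/3 :=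
  H22_bound_general ω11 ω13 ω33 h1 h3 h4 a2 a3 a4 ha2 ha3 ha4
end

section
/- If ω₁₁, ω₁₃ are complex numbers with |2ω₁₃ − ω₁₁²| ≤ 1, |ω₁₁| ≤ 1, and 3|ω₁₃|² ≤ 1 − |ω₁₁|², then 2|ω₁₃|·|4ω₁₃² − ω₁₁⁴| ≤ 4/3. -/
/-! Factor `4ω₁₃² − ω₁₁⁴ = (2ω₁₃ − ω₁₁²)(2ω₁₃ + ω₁₁²)`: the first factor has norm at most `1`
and the second at most `2a + b²`, where `a = |ω₁₃|`, `b = |ω₁₁|`. Using `b² ≤ 1 − 3a²` leaves the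
cubic `2a + 4a² − 6a³`, whose gap to `4/3` is `(1 − 3a²)(4/3 − 2a) ≥ 0`. -/

lemma norm_four_mul_sq_sub_pow_four_le (z w : ℂ) :
    ‖4 * z ^ 2 - w ^ 4‖ ≤ ‖2 * z - w ^ 2‖ * (2 * ‖z‖ + ‖w‖ ^ 2) := by
  have hfactor : 4 * z ^ 2 - w ^ 4 = (2 * z - w ^ 2) * (2 * z + w ^ 2) := by ring
  rw [hfactor, norm_mul]
  gcongr
  calc ‖2 * z + w ^ 2‖ ≤ ‖2 * z‖ + ‖w ^ 2‖ := norm_add_le _ _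
    _ = 2 * ‖z‖ + ‖w‖ ^ 2 := by simp

lemma two_mul_mul_two_mul_add_sq_le {a b : ℝ} (ha : 0 ≤ a) (hab : 3 * a ^ 2 ≤ 1 - b ^ 2) :
    2 * a * (2 * a + b ^ 2) ≤ 4 / 3 := by
  have h3a : 0 ≤ 1 - 3 * a ^ 2 := by nlinarith [sq_nonneg b]
  have ha' : a ≤ 2 / 3 := by nlinarith
  calc 2 * a * (2 * a + b ^ 2) ≤ 2 * a * (2 * a + (1 - 3 * a ^ 2)) := by gcongr; linarith
    _ = 4 / 3 - (1 - 3 * a ^ 2) * (4 / 3 - 2 * a) := by ring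
    _ ≤ 4 / 3 := by nlinarith [mul_nonneg h3a (by linarith : (0 : ℝ) ≤ 4 / 3 - 2 * a)]

theorem B1_bound_general (ω11 ω13 : ℂ)
    (h1 : ‖2*ω13 - ω11^2‖ ≤ 1)
    (h3 : 3 * ‖ω13‖^2 ≤ 1 - ‖ω11‖^2) :
    2 * ‖ω13‖ * ‖4*ω13^2 - ω11^4‖ ≤ 4/3 := by
  calc 2 * ‖ω13‖ * ‖4*ω13^2 - ω11^4‖
      ≤ 2 * ‖ω13‖ * (‖2*ω13 - ω11^2‖ * (2 * ‖ω13‖ + ‖ω11‖ ^ 2)) := by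
        gcongr; exact norm_four_mul_sq_sub_pow_four_le ω13 ω11
    _ ≤ 2 * ‖ω13‖ * (2 * ‖ω13‖ + ‖ω11‖ ^ 2) := by
        gcongr; exact mul_le_of_le_one_left (by positivity) h1
    _ ≤ 4 / 3 := two_mul_mul_two_mul_add_sq_le (norm_nonneg _) h3

theorem B1_bound (ω11 ω13 : ℂ)
    (h1 : ‖2*ω13 - ω11^2‖ ≤ 1)
    (h2 : ‖ω11‖ ≤ 1)
    (h3 : 3 * ‖ω13‖^2 ≤ 1 - ‖ω11‖^2) :
    2 * ‖ω13‖ * ‖4*ω13^2 - ω11^4‖ ≤ 4/3 :=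
  B1_bound_general ω11 ω13 h1 h3
end

section
/- Suppose complex numbers ω₁₁, ω₁₃, ω₁₅, ω₃₃, ω₃₅ satisfy: (i) |2ω₁₃ − ω₁₁²| ≤ 1; (ii) for all x₁, x₃ ∈ ℂ, |ω₁₁x₁ + ω₁₃x₃|² + 3|ω₁₃x₁ + ω₃₃x₃|² + 5|ω₁₅x₁ + ω₃₅x₃|² ≤ |x₁|² + |x₃|²/3; (iii) 3ω₁₅ − 3ω₁₁ω₁₃ + ω₁₁³ = 3ω₃₃. Then |−2ω₁₃(4ω₁₃² − ω₁₁⁴) − (2ω₃₃ − (2/3)ω₁₁³)² + (2ω₃₅ + 5ω₁₅²)(2ω₁₃ − ω₁₁²)| ≤ (32 + √285)/15. -/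
/-!
The Lebedev relation rewrites `2ω₃₃ - (2/3)ω₁₁³` as `2(ω₁₅ - ω₁₁ω₁₃)`, after which the quantity
factors as `(2ω₁₃ - ω₁₁²)(2ω₃₅ + 5ω₁₅² - 2ω₁₃(2ω₁₃ + ω₁₁²)) - 4(ω₁₅ - ω₁₁ω₁₃)²`. The triangle
inequality and `|2ω₁₃ - ω₁₁²| ≤ 1` bound its modulus by a polynomial in the moduli of the
coefficients, and the Grunsky inequality at `(x₁, x₃) = (1, 0)` and `(0, 1)` confines those moduli
to a region on which the polynomial is at most `16/5 ≤ (32 + √285)/15`.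
-/

theorem H31_expr_eq {ω11 ω13 ω15 ω33 ω35 : ℂ} (h3 : 3*ω15 - 3*ω11*ω13 + ω11^3 = 3*ω33) :
    -2*ω13*(4*ω13^2 - ω11^4) - (2*ω33 - (2/3)*ω11^3)^2 + (2*ω35 + 5*ω15^2)*(2*ω13 - ω11^2) =
      (2*ω13 - ω11^2) * (2*ω35 + 5*ω15^2 - 2*ω13*(2*ω13 + ω11^2)) - 4*(ω15 - ω11*ω13)^2 := by
  linear_combination (2/3)*(2*ω33 - (2/3)*ω11^3 + 2*ω15 - 2*ω11*ω13) * h3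

theorem norm_H31_expr_le {ω11 ω13 ω15 ω33 ω35 : ℂ} (h1 : ‖2*ω13 - ω11^2‖ ≤ 1)
    (h3 : 3*ω15 - 3*ω11*ω13 + ω11^3 = 3*ω33) :
    ‖-2*ω13*(4*ω13^2 - ω11^4) - (2*ω33 - (2/3)*ω11^3)^2 + (2*ω35 + 5*ω15^2)*(2*ω13 - ω11^2)‖ ≤
      2*‖ω13‖*(2*‖ω13‖ + ‖ω11‖^2) + 2*‖ω35‖ + 5*‖ω15‖^2 + 4*(‖ω15‖ + ‖ω11‖*‖ω13‖)^2 := by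
  have hfirst : ‖2*ω35 + 5*ω15^2 - 2*ω13*(2*ω13 + ω11^2)‖ ≤
      2*‖ω35‖ + 5*‖ω15‖^2 + 2*‖ω13‖*(2*‖ω13‖ + ‖ω11‖^2) := by
    calc _ ≤ ‖2*ω35‖ + ‖5*ω15^2‖ + ‖2*ω13*(2*ω13 + ω11^2)‖ :=
          (norm_sub_le _ _).trans (add_le_add_left (norm_add_le _ _) _)
      _ ≤ _ := by
        simp only [norm_mul, norm_pow, Complex.norm_ofNat]
        gcongr
        exact (norm_add_le _ _).trans_eq (by simp)
  have hsecond : ‖ω15 - ω11*ω13‖ ≤ ‖ω15‖ + ‖ω11‖*‖ω13‖ :=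
    (norm_sub_le _ _).trans_eq (by rw [norm_mul])
  rw [H31_expr_eq h3]
  calc _ ≤ ‖2*ω13 - ω11^2‖ * ‖2*ω35 + 5*ω15^2 - 2*ω13*(2*ω13 + ω11^2)‖ +
        4*‖ω15 - ω11*ω13‖^2 := by
        refine (norm_sub_le _ _).trans_eq ?_
        simp only [norm_mul, norm_pow, Complex.norm_ofNat]
    _ ≤ 1 * (2*‖ω35‖ + 5*‖ω15‖^2 + 2*‖ω13‖*(2*‖ω13‖ + ‖ω11‖^2)) +
        4*(‖ω15‖ + ‖ω11‖*‖ω13‖)^2 := by gcongr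
    _ = _ := by ring

-- Combine `4(d + bc)² ≤ 8d² + 8b²c²`, `2b²c ≤ b²(1 + c²)`, `2f ≤ 4f² + 1/4` and
-- `b²c² ≤ c²(1 - 3c² - 5d²)`.
theorem H31_majorant_le {b c d f : ℝ} (hbcd : b^2 + 3*c^2 + 5*d^2 ≤ 1)
    (hcf : c^2 + 5*f^2 ≤ 1/3) :
    2*c*(2*c + b^2) + 2*f + 5*d^2 + 4*(d + b*c)^2 ≤ 16/5 := by
  nlinarith [sq_nonneg (b*c - d), mul_nonneg (sq_nonneg b) (sq_nonneg (c - 1)),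
    sq_nonneg (2*f - 1/2), mul_nonneg (sq_nonneg c) (sub_nonneg.2 hbcd),
    sq_nonneg b, sq_nonneg c, sq_nonneg d]

theorem H31_bound_grunsky (ω11 ω13 ω15 ω33 ω35 : ℂ)
    (h1 : ‖2*ω13 - ω11^2‖ ≤ 1)
    (h2 : ∀ x1 x3 : ℂ,
      ‖ω11*x1 + ω13*x3‖^2 + 3*‖ω13*x1 + ω33*x3‖^2 +
        5*‖ω15*x1 + ω35*x3‖^2 ≤ ‖x1‖^2 + ‖x3‖^2 / 3)
    (h3 : 3*ω15 - 3*ω11*ω13 + ω11^3 = 3*ω33) :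
    ‖-2*ω13*(4*ω13^2 - ω11^4) - (2*ω33 - (2/3)*ω11^3)^2 +
      (2*ω35 + 5*ω15^2)*(2*ω13 - ω11^2)‖ ≤ (32 + Real.sqrt 285)/15 := by
  have hrow1 : ‖ω11‖^2 + 3*‖ω13‖^2 + 5*‖ω15‖^2 ≤ 1 := by simpa using h2 1 0
  have hrow3 : ‖ω13‖^2 + 3*‖ω33‖^2 + 5*‖ω35‖^2 ≤ 1/3 := by simpa using h2 0 1
  have hrow3' : ‖ω13‖^2 + 5*‖ω35‖^2 ≤ 1/3 := by linarith [sq_nonneg ‖ω33‖]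
  have hmajorant := H31_majorant_le hrow1 hrow3'
  have hsqrt : (16:ℝ) ≤ √285 := Real.le_sqrt_of_sq_le (by norm_num)
  linarith [norm_H31_expr_le (ω35 := ω35) h1 h3]
end

section
/- For the analytic function f on the unit disc determined by zf'(z)/f(z) = (1 + z³)/(1 − z³) with f(z) = z + a₂z² + ..., one has a₂ = a₃ = a₅ = 0, a₄ = 2/3, and consequently the third Hankel determinant H₃(1) = a₃(a₂a₄ − a₃²) − a₄(a₄ − a₂a₃) + a₅(a₃ − a₂²) equals −4/9. -/
/-!
Writing `f z = ∑ aₙ zⁿ` and differentiating termwise, `z f'(z) = ∑ n aₙ zⁿ`; multiplying by `z³`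
shifts indices by three. Uniqueness of power series expansions turns the differential equation
`z f' (1 - z³) = f (1 + z³)` into `(n - 1) aₙ = 0` for `n < 3` and `(n + 2) aₙ₊₃ = (n + 1) aₙ`,
from which `a₂ = 0`, `a₃ = a₀ = 0`, `a₄ = 2/3`, `a₅ = 3a₂/4 = 0`.
-/

open Metric FormalMultilinearSeries
open scoped NNReal

theorem hasFPowerSeriesOnBall_ofScalars_of_hasSum {c : ℕ → ℂ} {g : ℂ → ℂ} {r : ℝ≥0}
    (hr : 0 < r) (h : ∀ z ∈ ball (0 : ℂ) r, HasSum (fun n ↦ c n * z ^ n) (g z)) :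
    HasFPowerSeriesOnBall g (ofScalars ℂ c) 0 r := by
  refine ⟨?_, by exact_mod_cast hr, fun {y} hy ↦ ?_⟩
  · refine ENNReal.le_of_forall_nnreal_lt fun s hs ↦ le_radius_of_tendsto _ (l := 0) ?_
    have hs : ((s : ℝ) : ℂ) ∈ ball (0 : ℂ) r := by simpa using (show s < r by exact_mod_cast hs)
    simpa [ofScalars_norm] using (h _ hs).summable.tendsto_atTop_zero.norm
  · simp only [ofScalars_apply_eq, smul_eq_mul, zero_add]
    exact h y (by simpa using hy)

theorem eq_zero_of_hasSum_mul_pow_zero {c : ℕ → ℂ} {r : ℝ≥0} (hr : 0 < r)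
    (h : ∀ z ∈ ball (0 : ℂ) r, HasSum (fun n ↦ c n * z ^ n) 0) : c = 0 :=
  (ofScalars_series_eq_zero ℂ).mp
    (hasFPowerSeriesOnBall_ofScalars_of_hasSum hr h).hasFPowerSeriesAt.eq_zero

theorem hasSum_mul_deriv_of_hasSum {c : ℕ → ℂ} {g : ℂ → ℂ} {r : ℝ≥0} (hr : 0 < r)
    (h : ∀ z ∈ ball (0 : ℂ) r, HasSum (fun n ↦ c n * z ^ n) (g z)) :
    ∀ z ∈ ball (0 : ℂ) r, HasSum (fun n ↦ n * c n * z ^ n) (z * deriv g z) := by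
  intro z hz
  have hderiv := ((hasFPowerSeriesOnBall_ofScalars_of_hasSum hr h).fderiv.hasSum
    (by simpa using hz)).mapL (ContinuousLinearMap.apply ℂ ℂ z)
  have hterm : ∀ n, ContinuousLinearMap.apply ℂ ℂ z ((ofScalars ℂ c).derivSeries n fun _ ↦ z)
      = ((n + 1 : ℕ) : ℂ) * c (n + 1) * z ^ (n + 1) := by
    intro n
    rw [ContinuousLinearMap.apply_apply, derivSeries_apply_diag, ofScalars_apply_eq]
    simp only [nsmul_eq_mul, smul_eq_mul]
    push_cast
    ring
  have hz_deriv : fderiv ℂ g z z = z * deriv g z := by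
    rw [← fderiv_apply_one_eq_deriv, ← smul_eq_mul, ← map_smul, smul_eq_mul, mul_one]
  rw [funext hterm, ContinuousLinearMap.apply_apply, zero_add, hz_deriv] at hderiv
  simpa using (hasSum_nat_add_iff (f := fun n ↦ (n : ℂ) * c n * z ^ n) 1).mp hderiv

theorem HasSum.mul_pow_shift {R : Type*} [CommRing R] [TopologicalSpace R] [IsTopologicalRing R]
    {c : ℕ → R} {z s : R} (k : ℕ) (h : HasSum (fun n ↦ c n * z ^ n) s) :
    HasSum (fun n ↦ (if k ≤ n then c (n - k) else 0) * z ^ n) (s * z ^ k) := by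
  have hshift := (hasSum_nat_add_iff (f := fun n ↦ (if k ≤ n then c (n - k) else 0) * z ^ n) k).mp
    ((h.mul_right (z ^ k)).congr_fun fun n ↦ by simp [pow_add, mul_assoc])
  rwa [Finset.sum_eq_zero fun i hi ↦ by simp [(Finset.mem_range.mp hi).not_ge], add_zero] at hshift

section StarlikeODE

variable {f : ℂ → ℂ} {a : ℕ → ℂ}
  (hsum : ∀ z ∈ ball (0 : ℂ) 1, HasSum (fun n ↦ a n * z ^ n) (f z))
  (hode : ∀ z ∈ ball (0 : ℂ) 1, z * deriv f z * (1 - z ^ 3) = f z * (1 + z ^ 3))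
include hsum hode

theorem ode_coeff_relation :
    (fun n : ℕ ↦ n * a n - (if 3 ≤ n then ((n - 3 : ℕ) : ℂ) * a (n - 3) else 0)
      - (a n + if 3 ≤ n then a (n - 3) else 0)) = 0 := by
  have hderiv := hasSum_mul_deriv_of_hasSum one_pos hsum
  refine eq_zero_of_hasSum_mul_pow_zero one_pos fun z hz ↦ ?_
  have hcomb := ((hderiv z hz).sub ((hderiv z hz).mul_pow_shift 3)).sub
    ((hsum z hz).add ((hsum z hz).mul_pow_shift 3))
  rw [show z * deriv f z - z * deriv f z * z ^ 3 - (f z + f z * z ^ 3) = 0 by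
    linear_combination hode z hz] at hcomb
  exact hcomb.congr_fun fun n ↦ by ring

theorem ode_coeff_of_lt_three {n : ℕ} (hn : n < 3) : ((n : ℂ) - 1) * a n = 0 := by
  have := congrFun (ode_coeff_relation hsum hode) n
  simp only [show ¬ 3 ≤ n by omega, if_false, Pi.zero_apply] at this
  linear_combination this

theorem ode_coeff_add_three (n : ℕ) : ((n : ℂ) + 2) * a (n + 3) = (n + 1) * a n := by
  have := congrFun (ode_coeff_relation hsum hode) (n + 3)
  simp only [le_add_self, if_true, Nat.add_sub_cancel, Pi.zero_apply] at this
  push_cast at this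
  linear_combination this

end StarlikeODE

theorem extremal_starlike_general (f : ℂ → ℂ) (a : ℕ → ℂ)
    (ha0 : a 0 = 0) (ha1 : a 1 = 1)
    (hsum : ∀ z ∈ ball (0:ℂ) 1, HasSum (fun n => a n * z ^ n) (f z))
    (hode : ∀ z ∈ ball (0:ℂ) 1, z * deriv f z * (1 - z^3) = f z * (1 + z^3)) :
    a 2 = 0 ∧ a 3 = 0 ∧ a 5 = 0 ∧ a 4 = 2/3 ∧
    a 3 * (a 2 * a 4 - (a 3)^2) - a 4 * (a 4 - a 2 * a 3) + a 5 * (a 3 - (a 2)^2)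
      = -4/9 := by
  have ha2 := ode_coeff_of_lt_three hsum hode (n := 2) (by norm_num)
  have ha3 := ode_coeff_add_three hsum hode 0
  have h4 := ode_coeff_add_three hsum hode 1
  have h5 := ode_coeff_add_three hsum hode 2
  norm_num [ha0, ha1] at ha2 ha3 h4 h5
  have ha4 : a 4 = 2 / 3 := by linear_combination h4 / 3
  have ha5 : a 5 = 0 := by linear_combination (h5 + 3 * ha2) / 4
  refine ⟨ha2, ha3, ha5, ha4, ?_⟩
  rw [ha2, ha3, ha4, ha5]
  norm_num

theorem extremal_starlike (f : ℂ → ℂ) (a : ℕ → ℂ)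
    (ha0 : a 0 = 0) (ha1 : a 1 = 1)
    (hsum : ∀ z ∈ ball (0:ℂ) 1, HasSum (fun n => a n * z ^ n) (f z))
    (hdiff : DifferentiableOn ℂ f (ball (0:ℂ) 1))
    (hode : ∀ z ∈ ball (0:ℂ) 1, z * deriv f z * (1 - z^3) = f z * (1 + z^3)) :
    a 2 = 0 ∧ a 3 = 0 ∧ a 5 = 0 ∧ a 4 = 2/3 ∧
    a 3 * (a 2 * a 4 - (a 3)^2) - a 4 * (a 4 - a 2 * a 3) + a 5 * (a 3 - (a 2)^2)
      = -4/9 :=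
  extremal_starlike_general f a ha0 ha1 hsum hode
end

section
/- For all real t, s with 0 ≤ t ≤ 1 and 0 ≤ s with t² + 3s² ≤ 1, one has 4s² + 2st² ≤ (2/3)(2(1 − t²) + √3·t²·√(1 − t²)), and this right-hand side is at most 4/3. -/
theorem B1_real_estimate (t s : ℝ) (ht0 : 0 ≤ t) (ht1 : t ≤ 1) (hs : 0 ≤ s)
    (h : t^2 + 3*s^2 ≤ 1) :
    4*s^2 + 2*s*t^2 ≤ (2/3)*(2*(1 - t^2) + Real.sqrt 3 * t^2 * Real.sqrt (1 - t^2)) ∧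
    (2/3)*(2*(1 - t^2) + Real.sqrt 3 * t^2 * Real.sqrt (1 - t^2)) ≤ 4/3 := by
  have h1t : 0 ≤ 1 - t^2 := by nlinarith [sq_nonneg s]
  have hs3 : 3*s ≤ Real.sqrt 3 * Real.sqrt (1 - t^2) := by
    rw [← Real.sqrt_mul (by norm_num : (0:ℝ) ≤ 3)]
    rw [show (3:ℝ)*s = Real.sqrt ((3*s)^2) from (Real.sqrt_sq (by linarith)).symm]
    apply Real.sqrt_le_sqrt; nlinarith
  have ht2 : (0:ℝ) ≤ t^2 := sq_nonneg t
  have hv : Real.sqrt (1-t^2) ≤ 1 := by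
    rw [Real.sqrt_le_one]; linarith
  have h3 : Real.sqrt 3 ≤ 2 := by
    rw [show (2:ℝ) = Real.sqrt 4 by
      rw [show (4:ℝ) = 2^2 by norm_num]; exact (Real.sqrt_sq (by norm_num)).symm]
    exact Real.sqrt_le_sqrt (by norm_num)
  constructor
  · nlinarith [mul_le_mul_of_nonneg_left hs3 ht2]
  · nlinarith [mul_le_mul h3 hv (Real.sqrt_nonneg _) (by norm_num : (0:ℝ) ≤ 2), sq_nonneg t]
end
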